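/- Let U ⊆ U′ ⊆ V be subspaces and let ϖ : U × U′ → ℝ be a bilinear map whose restriction to U × U is skew-symmetric, i.e. ϖ(u,w) = −ϖ(w,u) for all u, w ∈ U. Define E = {(v,a) ∈ V × V* : v ∈ U and a(w) = ϖ(v,w) for all w ∈ U′}. Then E is an isotropic subspace of V × V*, pr_V E = U, pr_V E^⊥ = U′, E^⊥ = {(w,b) ∈ V × V* : w ∈ U′ and b(v) = −ϖ(v,w) for all v ∈ U}, and for every (v,a) ∈ E and (w,b) ∈ E^⊥ one has a(w) = ϖ(v,w) = −b(v). -/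
import Mathlib


open Module LinearMap

/-- The pairing metric `g((X,α),(Y,β)) = (1/2)(α(Y) + β(X))` on `V × V*`. -/
noncomputable def bigG (V : Type*) [AddCommGroup V] [Module ℝ V] :
    LinearMap.BilinForm ℝ (V × Module.Dual ℝ V) :=
  LinearMap.mk₂ ℝ (fun p q => (1 / 2 : ℝ) * (p.2 q.1 + q.2 p.1))
    (fun p p' q => by simp; ring)
    (fun c p q => by simp; ring)
    (fun p q q' => by simp; ring)
    (fun c p q => by simp; ring)

/-- The `g`-orthogonal set of a subset of `V × V*`. -/
def setOrth {V : Type*} [AddCommGroup V] [Module ℝ V] (A : Set (V × Module.Dual ℝ V)) :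
    Set (V × Module.Dual ℝ V) :=
  {q | ∀ p ∈ A, bigG V p q = 0}

/-- The set `E = {(v,a) : v ∈ U, a(w) = ϖ(v,w) ∀ w ∈ U′}` built from a bilinear map
`ϖ : U × U′ → ℝ`. -/
def wSet {V : Type*} [AddCommGroup V] [Module ℝ V] (U U' : Submodule ℝ V)
    (ϖ : U →ₗ[ℝ] U' →ₗ[ℝ] ℝ) : Set (V × Module.Dual ℝ V) :=
  {p | ∃ hv : p.1 ∈ U, ∀ w : U', p.2 w = ϖ ⟨p.1, hv⟩ w}

lemma bigG_apply {V : Type*} [AddCommGroup V] [Module ℝ V] (p q : V × Module.Dual ℝ V) :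
    bigG V p q = (1 / 2 : ℝ) * (p.2 q.1 + q.2 p.1) := rfl

/-- extend a functional from a subspace -/
lemma ext_fun {V : Type*} [AddCommGroup V] [Module ℝ V] (W : Submodule ℝ V)
    (f : W →ₗ[ℝ] ℝ) : ∃ g : Module.Dual ℝ V, ∀ w : W, g w = f w := by
  obtain ⟨g, hg⟩ := LinearMap.exists_extend f
  exact ⟨g, fun w => by rw [← hg]; rfl⟩

/-- For subspaces `U ⊆ U′ ⊆ V` and a bilinear `ϖ : U × U′ → ℝ` skew-symmetric on `U × U`,
the set `E = {(v,a) : v ∈ U, a(w)=ϖ(v,w) ∀ w ∈ U′}` is an isotropic subspace with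
`pr_V E = U`, `pr_V E^⊥ = U′`, `E^⊥ = {(w,b) : w ∈ U′, b(v) = -ϖ(v,w) ∀ v ∈ U}`, and
`a(w) = ϖ(v,w) = -b(v)` for `(v,a) ∈ E`, `(w,b) ∈ E^⊥`. -/
theorem stmt2 (V : Type*) [AddCommGroup V] [Module ℝ V] [FiniteDimensional ℝ V]
    (U U' : Submodule ℝ V) (hUU' : U ≤ U')
    (ϖ : U →ₗ[ℝ] U' →ₗ[ℝ] ℝ)
    (hskew : ∀ u w : U, ϖ u (Submodule.inclusion hUU' w) = -ϖ w (Submodule.inclusion hUU' u)) :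
    (∃ E₀ : Submodule ℝ (V × Dual ℝ V), (E₀ : Set (V × Dual ℝ V)) = wSet U U' ϖ) ∧
    (∀ p ∈ wSet U U' ϖ, ∀ q ∈ wSet U U' ϖ, bigG V p q = 0) ∧
    (Prod.fst '' wSet U U' ϖ = (U : Set V)) ∧
    (setOrth (wSet U U' ϖ) =
      {q : V × Dual ℝ V | ∃ hw : q.1 ∈ U', ∀ v : U, q.2 v = -ϖ v ⟨q.1, hw⟩}) ∧
    (Prod.fst '' setOrth (wSet U U' ϖ) = (U' : Set V)) ∧
    (∀ (v : U) (w : U') (a b : Dual ℝ V),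
      ((v : V), a) ∈ wSet U U' ϖ → ((w : V), b) ∈ setOrth (wSet U U' ϖ) →
        a w = ϖ v w ∧ a w = -b v) := by
  -- E is a submodule
  have hsub : ∃ E₀ : Submodule ℝ (V × Dual ℝ V), (E₀ : Set (V × Dual ℝ V)) = wSet U U' ϖ := by
    refine ⟨⟨⟨⟨wSet U U' ϖ, ?_⟩, ?_⟩, ?_⟩, rfl⟩
    · rintro ⟨v, a⟩ ⟨v', a'⟩ ⟨hv, ha⟩ ⟨hv', ha'⟩
      refine ⟨U.add_mem hv hv', fun w => ?_⟩
      have h : a ↑w = ϖ ⟨v, hv⟩ ↑w := ha w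
      have h' : a' ↑w = ϖ ⟨v', hv'⟩ ↑w := ha' w
      show (a + a') ↑w = ϖ ((⟨v, hv⟩ : U) + ⟨v', hv'⟩) ↑w
      rw [map_add, LinearMap.add_apply, LinearMap.add_apply, h, h']
    · exact ⟨U.zero_mem, fun w => by
        show (0 : Dual ℝ V) ↑w = ϖ (0 : U) ↑w
        rw [map_zero]; rfl⟩
    · rintro c ⟨v, a⟩ ⟨hv, ha⟩
      refine ⟨U.smul_mem c hv, fun w => ?_⟩
      have h : a ↑w = ϖ ⟨v, hv⟩ ↑w := ha w
      show (c • a) ↑w = ϖ (c • (⟨v, hv⟩ : U)) ↑w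
      rw [map_smul, LinearMap.smul_apply, LinearMap.smul_apply, h]
  -- isotropic
  have hiso : ∀ p ∈ wSet U U' ϖ, ∀ q ∈ wSet U U' ϖ, bigG V p q = 0 := by
    rintro ⟨v, a⟩ ⟨hv, ha⟩ ⟨v', a'⟩ ⟨hv', ha'⟩
    rw [bigG_apply]
    have h1 : a v' = ϖ ⟨v, hv⟩ (Submodule.inclusion hUU' ⟨v', hv'⟩) :=
      ha (Submodule.inclusion hUU' ⟨v', hv'⟩)
    have h2 : a' v = ϖ ⟨v', hv'⟩ (Submodule.inclusion hUU' ⟨v, hv⟩) :=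
      ha' (Submodule.inclusion hUU' ⟨v, hv⟩)
    simp only at h1 h2 ⊢
    rw [h1, h2, hskew ⟨v, hv⟩ ⟨v', hv'⟩]
    ring
  -- pr E = U
  have hprE : Prod.fst '' wSet U U' ϖ = (U : Set V) := by
    ext v
    constructor
    · rintro ⟨⟨v', a⟩, ⟨hv', _⟩, rfl⟩; exact hv'
    · intro hv
      obtain ⟨a, ha⟩ := ext_fun U' (ϖ ⟨v, hv⟩)
      exact ⟨(v, a), ⟨hv, ha⟩, rfl⟩
  -- orthogonal complement
  have horth : setOrth (wSet U U' ϖ) =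
      {q : V × Dual ℝ V | ∃ hw : q.1 ∈ U', ∀ v : U, q.2 v = -ϖ v ⟨q.1, hw⟩} := by
    ext ⟨w, b⟩
    constructor
    · intro hq
      -- first: w ∈ U'
      have hw : w ∈ U' := by
        rw [← Subspace.forall_mem_dualAnnihilator_apply_eq_zero_iff U' w]
        intro φ hφ
        rw [Submodule.mem_dualAnnihilator] at hφ
        have h0 : ((0 : V), φ) ∈ wSet U U' ϖ := by
          refine ⟨U.zero_mem, fun w' => ?_⟩
          have : (⟨(0 : V), U.zero_mem⟩ : U) = 0 := rfl
          rw [this, map_zero, LinearMap.zero_apply]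
          exact hφ w' w'.2
        have := hq _ h0
        rw [bigG_apply] at this
        simp only [map_zero] at this
        linarith
      refine ⟨hw, fun v => ?_⟩
      obtain ⟨a, ha⟩ := ext_fun U' (ϖ v)
      have hmem : ((v : V), a) ∈ wSet U U' ϖ := by
        refine ⟨v.2, fun w' => ?_⟩
        rw [ha w']
      have := hq _ hmem
      rw [bigG_apply] at this
      have haw : a w = ϖ v ⟨w, hw⟩ := ha ⟨w, hw⟩
      simp only at this
      rw [haw] at this
      linarith
    · rintro ⟨hw, hb⟩ ⟨v, a⟩ ⟨hv, ha⟩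
      rw [bigG_apply]
      have h1 : a w = ϖ ⟨v, hv⟩ ⟨w, hw⟩ := ha ⟨w, hw⟩
      have h2 : b v = -ϖ ⟨v, hv⟩ ⟨w, hw⟩ := hb ⟨v, hv⟩
      simp only at h1 h2 ⊢
      rw [h1, h2]; ring
  -- pr E⊥ = U'
  have hprO : Prod.fst '' setOrth (wSet U U' ϖ) = (U' : Set V) := by
    rw [horth]
    ext w
    constructor
    · rintro ⟨⟨w', b⟩, ⟨hw', _⟩, rfl⟩; exact hw'
    · intro hw
      obtain ⟨b, hb⟩ := ext_fun U ((-ϖ.flip) ⟨w, hw⟩)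
      refine ⟨(w, b), ⟨hw, fun v => ?_⟩, rfl⟩
      rw [hb v]; rfl
  refine ⟨hsub, hiso, hprE, horth, hprO, ?_⟩
  rintro v w a b ⟨hv, ha⟩ hmem
  rw [horth] at hmem
  obtain ⟨hw, hb⟩ := hmem
  have h1 : a w = ϖ ⟨(v : V), hv⟩ w := by
    have := ha w; simpa using this
  have h2 : b v = -ϖ v ⟨(w : V), hw⟩ := hb v
  have hv' : (⟨(v : V), hv⟩ : U) = v := Subtype.ext rfl
  have hw' : (⟨(w : V), hw⟩ : U') = w := Subtype.ext rfl
  rw [hv'] at h1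
  rw [hw'] at h2
  exact ⟨h1, by rw [h1, h2]; ring⟩
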